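/- arXiv:1306.1427 — 4 statements merged into one kernel-verified Lean document; each statement's English description precedes it below -/
import Mathlib

section
/- Let a < 0, c > 0, d real, and φ the λ=0 first return map φ(x,y) = ((2ax + Δ)/(4a), y + d(2ax + Δ)/(2ac)) with Δ = -sqrt(-12 a^2 (x^2 + 4y)). Then the image under φ of the curve {(0, y) : y < 0} is the curve {(x, -x^2/3 + 2dx/c) : x > 0}. -/
/-! Parametrise the negative `y`-axis by `y = -x ^ 2 / 3` with `x > 0`. There the discriminant
`-12 a ^ 2 (x ^ 2 + 4 y)` is `(4 a x) ^ 2`, so, as `a < 0`, `Δ = 4 a x` and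
`φ (0, -x ^ 2 / 3) = (x, -x ^ 2 / 3 + 2 d x / c)`. -/

lemma sqrt_neg_twelve_mul_sq_mul_neg_sq_div_three {a x : ℝ} (ha : a < 0) (hx : 0 ≤ x) :
    Real.sqrt (-12 * a ^ 2 * (0 ^ 2 + 4 * (-x ^ 2 / 3))) = -4 * a * x := by
  rw [show -12 * a ^ 2 * (0 ^ 2 + 4 * (-x ^ 2 / 3)) = (-4 * a * x) ^ 2 by ring,
    Real.sqrt_sq (by nlinarith)]

theorem image_of_negative_axis_general (a c d : ℝ) (ha : a < 0)
    (φ : ℝ × ℝ → ℝ × ℝ)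
    (hφ : ∀ x y : ℝ, φ (x, y) =
      ((2 * a * x + (-Real.sqrt (-12 * a ^ 2 * (x ^ 2 + 4 * y)))) / (4 * a),
        y + d * (2 * a * x + (-Real.sqrt (-12 * a ^ 2 * (x ^ 2 + 4 * y)))) / (2 * a * c))) :
    φ '' {p : ℝ × ℝ | ∃ y : ℝ, y < 0 ∧ p = (0, y)} =
      {p : ℝ × ℝ | ∃ x : ℝ, 0 < x ∧ p = (x, -x ^ 2 / 3 + 2 * d * x / c)} := by
  have φ_on_parabola : ∀ x : ℝ, 0 ≤ x → φ (0, -x ^ 2 / 3) = (x, -x ^ 2 / 3 + 2 * d * x / c) := by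
    intro x hx
    have ha0 : a ≠ 0 := ha.ne
    rw [hφ, sqrt_neg_twelve_mul_sq_mul_neg_sq_div_three ha hx, Prod.mk.injEq]
    constructor <;> field_simp <;> ring
  ext p
  constructor
  · rintro ⟨_, ⟨y, hy, rfl⟩, rfl⟩
    obtain ⟨x, hx, rfl⟩ : ∃ x : ℝ, 0 < x ∧ y = -x ^ 2 / 3 :=
      ⟨Real.sqrt (-3 * y), Real.sqrt_pos.2 (by linarith), by rw [Real.sq_sqrt (by linarith)]; ring⟩
    exact ⟨x, hx, φ_on_parabola x hx.le⟩
  · rintro ⟨x, hx, rfl⟩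
    exact ⟨_, ⟨-x ^ 2 / 3, by nlinarith, rfl⟩, φ_on_parabola x hx.le⟩

/-- the image under φ of {(0, y) : y < 0} is
{(x, -x²/3 + 2dx/c) : x > 0}. -/
theorem image_of_negative_axis (a c d : ℝ) (ha : a < 0) (hc : 0 < c)
    (φ : ℝ × ℝ → ℝ × ℝ)
    (hφ : ∀ x y : ℝ, φ (x, y) =
      ((2 * a * x + (-Real.sqrt (-12 * a ^ 2 * (x ^ 2 + 4 * y)))) / (4 * a),
        y + d * (2 * a * x + (-Real.sqrt (-12 * a ^ 2 * (x ^ 2 + 4 * y)))) / (2 * a * c))) :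
    φ '' {p : ℝ × ℝ | ∃ y : ℝ, y < 0 ∧ p = (0, y)} =
      {p : ℝ × ℝ | ∃ x : ℝ, 0 < x ∧ p = (x, -x ^ 2 / 3 + 2 * d * x / c)} :=
  image_of_negative_axis_general a c d ha φ hφ
end

section
/- Let a < 0, c > 0, d real, and φ the λ=0 first return map φ(x,y) = ((2ax + Δ)/(4a), y + d(2ax + Δ)/(2ac)) with Δ = -sqrt(-12 a^2 (x^2+4y)). If x_0 > 0 and y_0 < -x_0^2, then φ(x_0, y_0) lies strictly between the parabolas y = -x^2/3 + 2dx/c and y = -x^2/4 + 2dx/c, i.e. writing (x_1, y_1) = φ(x_0, y_0) one has x_1 > 0 and -x_1^2/3 + 2 d x_1/c < y_1 < -x_1^2/4 + 2 d x_1/c. -/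
/-! With `w = √(-3 (x₀² + 4 y₀))` the map reads `φ(x₀, y₀) = (x₁, y₀ + 2 d x₁ / c)` with
`x₁ = (x₀ + w) / 2`, so the `2 d x / c` terms cancel and the claim becomes
`-x₁² / 3 < y₀ < -x₁² / 4`. Since `12 y₀ = -3 x₀² - w²`, these two inequalities are
`x₀ (w - x₀) > 0` and `(w - 3 x₀)² > 0`, and `y₀ < -x₀²` is exactly `w > 3 x₀`. -/

open Real

lemma sqrt_neg_twelve_mul_sq_mul (a q : ℝ) : √(-12 * a ^ 2 * q) = 2 * |a| * √(-3 * q) := by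
  have h : -12 * a ^ 2 * q = (2 * |a|) ^ 2 * (-3 * q) := by rw [mul_pow, sq_abs]; ring
  rw [h, sqrt_mul (by positivity), sqrt_sq (by positivity)]

lemma lt_sqrt_neg_three_mul_of_lt_neg_sq {x y : ℝ} (hx : 0 ≤ x) (hy : y < -x ^ 2) :
    3 * x < √(-3 * (x ^ 2 + 4 * y)) :=
  (lt_sqrt (by positivity)).2 (by linarith)

lemma between_parabolas_of_sq_eq {x y w : ℝ} (hx : 0 < x) (hw : 3 * x < w)
    (hw2 : w ^ 2 = -3 * (x ^ 2 + 4 * y)) :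
    -((x + w) / 2) ^ 2 / 3 < y ∧ y < -((x + w) / 2) ^ 2 / 4 := by
  have hy : y = -(3 * x ^ 2 + w ^ 2) / 12 := by linarith
  subst hy
  constructor
  · nlinarith [mul_pos hx (show 0 < w - x by linarith)]
  · nlinarith [mul_pos (sub_pos.2 hw) (sub_pos.2 hw)]

/-- the image under φ of Σ^{c+} = {x>0, y<-x²} lies strictly
between the parabolas y = -x²/3 + 2dx/c and y = -x²/4 + 2dx/c. -/
theorem image_between_parabolas (a c d : ℝ) (ha : a < 0) (hc : 0 < c)
    (φ : ℝ × ℝ → ℝ × ℝ)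
    (hφ : ∀ x y : ℝ, φ (x, y) =
      ((2 * a * x + (-Real.sqrt (-12 * a ^ 2 * (x ^ 2 + 4 * y)))) / (4 * a),
        y + d * (2 * a * x + (-Real.sqrt (-12 * a ^ 2 * (x ^ 2 + 4 * y)))) / (2 * a * c)))
    (x0 y0 : ℝ) (hx0 : 0 < x0) (hy0 : y0 < -x0 ^ 2) :
    0 < (φ (x0, y0)).1 ∧
      -(φ (x0, y0)).1 ^ 2 / 3 + 2 * d * (φ (x0, y0)).1 / c < (φ (x0, y0)).2 ∧
      (φ (x0, y0)).2 < -(φ (x0, y0)).1 ^ 2 / 4 + 2 * d * (φ (x0, y0)).1 / c := by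
  set w := √(-3 * (x0 ^ 2 + 4 * y0)) with hw
  have hw3 : 3 * x0 < w := lt_sqrt_neg_three_mul_of_lt_neg_sq hx0.le hy0
  have hw2 : w ^ 2 = -3 * (x0 ^ 2 + 4 * y0) := sq_sqrt (by nlinarith)
  have hφ0 : φ (x0, y0) = ((x0 + w) / 2, y0 + 2 * d * ((x0 + w) / 2) / c) := by
    rw [hφ, sqrt_neg_twelve_mul_sq_mul, abs_of_neg ha, ← hw]
    have ha0 : a ≠ 0 := ha.ne
    congr 1 <;> field_simp
    ring
  obtain ⟨hlow, hup⟩ := between_parabolas_of_sq_eq hx0 hw3 hw2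
  rw [hφ0]
  exact ⟨by linarith, by linarith, by linarith⟩
end

section
/- Let a < 0, c > 0, d < 0 and λ < 0 with Δ_2 := (ad)^2 - adcλ > 0. Then the two eigenvalues ξ_± = (2ad - cλ ± 2 sqrt(Δ_2))/(cλ) satisfy ξ_+ · ξ_- = 1 and ξ_+ ≠ ξ_-, and exactly one of them has absolute value greater than 1; hence the origin is a hyperbolic saddle fixed point of the linearized first return map. -/
/-!
With `s = √Δ₂`, the numerators `p ± q` of `ξ±` (where `p = 2ad - cλ`, `q = 2s`) satisfy
`p² - q² = (cλ)²`, so `ξ₊ξ₋ = 1`; they differ because `s > 0`. Two distinct reals with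
product `1` cannot both lie on the unit circle (`|x| = 1` forces `x⁻¹ = x`), so one of them
lies strictly outside and the other strictly inside.
-/

theorem add_div_mul_sub_div_eq_one {K : Type*} [Field K] {p q r : K}
    (h : p ^ 2 - q ^ 2 = r ^ 2) (hr : r ≠ 0) : (p + q) / r * ((p - q) / r) = 1 := by
  rw [div_mul_div_comm, div_eq_one_iff_eq (mul_ne_zero hr hr)]
  linear_combination h

theorem add_div_ne_sub_div {K : Type*} [Field K] [CharZero K] {p q r : K}
    (hq : q ≠ 0) (hr : r ≠ 0) : (p + q) / r ≠ (p - q) / r := by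
  rw [Ne, div_left_inj' hr]
  intro h
  exact hq (by linear_combination h / 2)

theorem one_lt_abs_and_abs_lt_one_or_of_mul_eq_one_of_ne {K : Type*} [Field K] [LinearOrder K]
    [IsStrictOrderedRing K] {x y : K} (h : x * y = 1) (hne : x ≠ y) :
    (1 < |x| ∧ |y| < 1) ∨ (|x| < 1 ∧ 1 < |y|) := by
  have habs : |x| * |y| = 1 := by rw [← abs_mul, h, abs_one]
  have hx : |x| ≠ 1 := by
    intro hx
    have hxx : x * x = 1 := by rw [← abs_mul_abs_self, hx, one_mul]
    exact hne <| calc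
      x = (x * y) * x := by rw [h, one_mul]
      _ = y * (x * x) := by ring
      _ = y := by rw [hxx, mul_one]
  rcases hx.lt_or_gt with hlt | hgt
  · exact Or.inr ⟨hlt, by nlinarith [abs_nonneg x]⟩
  · exact Or.inl ⟨hgt, by nlinarith [abs_nonneg y]⟩

theorem saddle_first_return_general (a c d lam : ℝ) (hc : 0 < c)
    (hlam : lam < 0) (hΔ : 0 < (a * d) ^ 2 - a * d * c * lam) :
    ((2 * a * d - c * lam + 2 * Real.sqrt ((a * d) ^ 2 - a * d * c * lam)) / (c * lam)) *
        ((2 * a * d - c * lam - 2 * Real.sqrt ((a * d) ^ 2 - a * d * c * lam)) / (c * lam)) = 1 ∧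
      (2 * a * d - c * lam + 2 * Real.sqrt ((a * d) ^ 2 - a * d * c * lam)) / (c * lam) ≠
        (2 * a * d - c * lam - 2 * Real.sqrt ((a * d) ^ 2 - a * d * c * lam)) / (c * lam) ∧
      ((1 < |(2 * a * d - c * lam + 2 * Real.sqrt ((a * d) ^ 2 - a * d * c * lam)) / (c * lam)| ∧
          |(2 * a * d - c * lam - 2 * Real.sqrt ((a * d) ^ 2 - a * d * c * lam)) / (c * lam)| < 1) ∨
        (|(2 * a * d - c * lam + 2 * Real.sqrt ((a * d) ^ 2 - a * d * c * lam)) / (c * lam)| < 1 ∧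
          1 < |(2 * a * d - c * lam - 2 * Real.sqrt ((a * d) ^ 2 - a * d * c * lam)) / (c * lam)|)) := by
  set s := Real.sqrt ((a * d) ^ 2 - a * d * c * lam)
  have hs : s ^ 2 = (a * d) ^ 2 - a * d * c * lam := Real.sq_sqrt hΔ.le
  have hs0 : s ≠ 0 := (Real.sqrt_pos.mpr hΔ).ne'
  have hr : c * lam ≠ 0 := (mul_neg_of_pos_of_neg hc hlam).ne
  have hprod := add_div_mul_sub_div_eq_one (p := 2 * a * d - c * lam) (q := 2 * s)
    (by linear_combination (-4) * hs) hr
  have hne := add_div_ne_sub_div (p := 2 * a * d - c * lam) (mul_ne_zero two_ne_zero hs0) hr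
  exact ⟨hprod, hne, one_lt_abs_and_abs_lt_one_or_of_mul_eq_one_of_ne hprod hne⟩

/-- for λ < 0 with Δ₂ = (ad)² - adcλ > 0, the eigenvalues
ξ± = (2ad - cλ ± 2√Δ₂)/(cλ) satisfy ξ₊ξ₋ = 1, ξ₊ ≠ ξ₋, and exactly one has
absolute value greater than 1 (hyperbolic saddle). -/
theorem saddle_first_return (a c d lam : ℝ) (ha : a < 0) (hc : 0 < c)
    (hd : d < 0) (hlam : lam < 0) (hΔ : 0 < (a * d) ^ 2 - a * d * c * lam) :
    ((2 * a * d - c * lam + 2 * Real.sqrt ((a * d) ^ 2 - a * d * c * lam)) / (c * lam)) *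
        ((2 * a * d - c * lam - 2 * Real.sqrt ((a * d) ^ 2 - a * d * c * lam)) / (c * lam)) = 1 ∧
      (2 * a * d - c * lam + 2 * Real.sqrt ((a * d) ^ 2 - a * d * c * lam)) / (c * lam) ≠
        (2 * a * d - c * lam - 2 * Real.sqrt ((a * d) ^ 2 - a * d * c * lam)) / (c * lam) ∧
      ((1 < |(2 * a * d - c * lam + 2 * Real.sqrt ((a * d) ^ 2 - a * d * c * lam)) / (c * lam)| ∧
          |(2 * a * d - c * lam - 2 * Real.sqrt ((a * d) ^ 2 - a * d * c * lam)) / (c * lam)| < 1) ∨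
        (|(2 * a * d - c * lam + 2 * Real.sqrt ((a * d) ^ 2 - a * d * c * lam)) / (c * lam)| < 1 ∧
          1 < |(2 * a * d - c * lam - 2 * Real.sqrt ((a * d) ^ 2 - a * d * c * lam)) / (c * lam)|)) :=
  saddle_first_return_general a c d lam hc hlam hΔ
end

section
/- Let a < 0, c > 0, d real, λ < 0. Define φ_{Z_λ} as the first return map with Δ_1(x,y) = 3λ - sqrt(9λ^2 + 36aλx - 12a^2(x^2+4y)). Then for x_0 > 0, φ_{Z_λ}(x_0, -x_0^2) = (2x_0 + 3λ/(2a), -x_0^2 - 3λ(λ + 2ax_0)/(2a^2) + d(3λ + 4ax_0)/(ac)). -/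
/-! On the fold curve `y = -x²` the radicand of `Δ₁` is the perfect square `(3λ + 6ax)²`,
and for `a < 0 < x`, `λ < 0` the base `3λ + 6ax` is negative, so `Δ₁ = 6λ + 6ax`.
Substituting this into `φ_{Z_λ}` leaves a rational identity. -/

lemma sqrt_radicand_on_fold {a lam x : ℝ} (h : 3 * lam + 6 * a * x ≤ 0) :
    Real.sqrt (9 * lam ^ 2 + 36 * a * lam * x - 12 * a ^ 2 * (x ^ 2 + 4 * (-x ^ 2)))
      = -(3 * lam + 6 * a * x) := by
  rw [show 9 * lam ^ 2 + 36 * a * lam * x - 12 * a ^ 2 * (x ^ 2 + 4 * (-x ^ 2))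
      = (-(3 * lam + 6 * a * x)) ^ 2 by ring, Real.sqrt_sq (by linarith)]

/-- evaluation of the perturbed first return map on the fold
curve: φ_{Z_λ}(x₀, -x₀²) = (2x₀ + 3λ/(2a), -x₀² - 3λ(λ+2ax₀)/(2a²) + d(3λ+4ax₀)/(ac)). -/
theorem perturbed_return_on_parabola (a c d lam : ℝ) (ha : a < 0) (hc : 0 < c)
    (hlam : lam < 0)
    (φ : ℝ × ℝ → ℝ × ℝ)
    (hφ : ∀ x y : ℝ, φ (x, y) =
      ((2 * a * x + (3 * lam - Real.sqrt (9 * lam ^ 2 + 36 * a * lam * x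
          - 12 * a ^ 2 * (x ^ 2 + 4 * y)))) / (4 * a),
        y + d * (2 * a * x + (3 * lam - Real.sqrt (9 * lam ^ 2 + 36 * a * lam * x
          - 12 * a ^ 2 * (x ^ 2 + 4 * y)))) / (2 * a * c)
          + lam * (-6 * a * x - (3 * lam - Real.sqrt (9 * lam ^ 2 + 36 * a * lam * x
          - 12 * a ^ 2 * (x ^ 2 + 4 * y)))) / (4 * a ^ 2))) :
    ∀ x0 : ℝ, 0 < x0 →
      φ (x0, -x0 ^ 2) = (2 * x0 + 3 * lam / (2 * a),
        -x0 ^ 2 - 3 * lam * (lam + 2 * a * x0) / (2 * a ^ 2)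
          + d * (3 * lam + 4 * a * x0) / (a * c)) := by
  intro x0 hx0
  have hbase : 3 * lam + 6 * a * x0 ≤ 0 := by nlinarith
  rw [hφ, sqrt_radicand_on_fold hbase]
  have ha₀ : a ≠ 0 := ha.ne
  have hc₀ : c ≠ 0 := hc.ne'
  ext <;> field_simp <;> ring
end
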